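/- arXiv:1701.01173 — 6 statements merged into one kernel-verified Lean document; each statement's English description precedes it below -/
import Mathlib

section
/- Let k ≥ 1 and let d : ℕ → ℕ be a sequence such that d i ≤ k for all i, d i = k for some i, σ^j d ⪯ d for every j ∈ ℕ, and d is not eventually 0 (for every N there exists i ≥ N with d i ≠ 0). Then there exists a real number β with k < β ≤ k + 1 such that ∑_{i=0}^∞ d i / β^(i+1) = 1. -/
/-!
Comparing the first letters of `d` and its shifts `σ^i d` shows that `d 0` is the largest digit,
so `d 0 = k`. For `β > 1` the value `∑ dᵢ β^{-(i+1)}` is continuous in `β`. At `β = k + 1` it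
is at most `∑ k (k+1)^{-(i+1)} = 1`. Just above `β = k` it exceeds `1`, because already
`d₀/β + d_{i₀}/β^{i₀+1}` does, for any later nonzero digit `d_{i₀}`. The intermediate value theorem then produces
`β ∈ (k, k+1]`.
-/

namespace BetaShift

variable {A : Type*}

/-- The shift map: `(shift x) n = x (n+1)`. -/
def shift (x : ℕ → A) : ℕ → A := fun n => x (n + 1)

/-- Lexicographic order on one-sided sequences: `x = y`, or there is an index `i`
such that `x j = y j` for all `j < i` and `x i < y i`. -/
def SeqLe [LinearOrder A] (x y : ℕ → A) : Prop :=
  x = y ∨ ∃ i, (∀ j, j < i → x j = y j) ∧ x i < y i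

/-- A word `w` occurs in the sequence `x`. -/
def Occurs (w : List A) (x : ℕ → A) : Prop :=
  ∃ i : ℕ, ∀ j : Fin w.length, x (i + j) = w.get j

/-- `Complexity x n` is the number `Φ_n(x)` of distinct words of length `n` occurring in `x`. -/
noncomputable def Complexity (x : ℕ → A) (n : ℕ) : ℕ :=
  Set.ncard {w : List A | w.length = n ∧ Occurs w x}

/-- A sequence is eventually periodic if there are `p ≥ 1` and `N` with
`d (i + p) = d i` for all `i ≥ N`. -/
def EventuallyPeriodic (d : ℕ → A) : Prop :=
  ∃ p, 1 ≤ p ∧ ∃ N, ∀ i, N ≤ i → d (i + p) = d i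

/-- `(d)_k`, the `k`-letter prefix of the sequence `d`, as a word. -/
def prefixWord (d : ℕ → A) (k : ℕ) : List A := List.ofFn (fun i : Fin k => d i)

variable {m : ℕ}

/-- `d` is admissible: every shift of `d` is lexicographically ≤ `d`,
and `d` is not eventually `0`. -/
def Admissible (d : ℕ → Fin m) : Prop :=
  (∀ i, SeqLe (shift^[i] d) d) ∧ ∀ N, ∃ i, N ≤ i ∧ (d i).val ≠ 0

/-- The one-sided β-shift `X_d` determined by the admissible sequence `d`. -/
def XSet (d : ℕ → Fin m) : Set (ℕ → Fin m) :=
  {x | ∀ i, SeqLe (shift^[i] x) d}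

/-- The language of `X_d`: all words occurring in some point of `X_d`. -/
def Lang (d : ℕ → Fin m) : Set (List (Fin m)) :=
  {w | ∃ x ∈ XSet d, Occurs w x}

/-- The follower set of the word `w` in `X_d`. -/
def Fol (d : ℕ → Fin m) (w : List (Fin m)) : Set (List (Fin m)) :=
  {u | w ++ u ∈ Lang d}

/-- The predecessor set of the word `w` in `X_d`. -/
def Pred (d : ℕ → Fin m) (w : List (Fin m)) : Set (List (Fin m)) :=
  {s | s ++ w ∈ Lang d}

/-- The extender set of the word `w` in `X_d`. -/
def Ext (d : ℕ → Fin m) (w : List (Fin m)) : Set (List (Fin m) × List (Fin m)) :=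
  {p | p.1 ++ w ++ p.2 ∈ Lang d}

/-- `|F(n)|`: the number of distinct follower sets of words of length `n` in `X_d`. -/
noncomputable def FolCount (d : ℕ → Fin m) (n : ℕ) : ℕ :=
  Set.ncard {S | ∃ w ∈ Lang d, w.length = n ∧ S = Fol d w}

/-- `|P(n)|`: the number of distinct predecessor sets of words of length `n` in `X_d`. -/
noncomputable def PredCount (d : ℕ → Fin m) (n : ℕ) : ℕ :=
  Set.ncard {S | ∃ w ∈ Lang d, w.length = n ∧ S = Pred d w}

/-- `|E(n)|`: the number of distinct extender sets of words of length `n` in `X_d`. -/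
noncomputable def ExtCount (d : ℕ → Fin m) (n : ℕ) : ℕ :=
  Set.ncard {S | ∃ w ∈ Lang d, w.length = n ∧ S = Ext d w}

/-- The largest `k ≤ n` such that the `k`-letter prefix of `d` is a suffix of `v`
(`k = 0`, the empty prefix, always works). -/
def classIndex (d : ℕ → Fin m) (n : ℕ) (v : List (Fin m)) : ℕ :=
  Nat.findGreatest (fun k => prefixWord d k <:+ v) n

/-- Lexicographic comparison of (equal-length) words: `u = v`, or at the first
index where they differ, `u` takes the smaller value. -/
def WordLe [LinearOrder A] (u v : List A) : Prop :=
  u = v ∨ ∃ i, ∃ (hu : i < u.length) (hv : i < v.length),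
    (∀ j (hju : j < u.length) (hjv : j < v.length), j < i → u.get ⟨j, hju⟩ = v.get ⟨j, hjv⟩) ∧
    u.get ⟨i, hu⟩ < v.get ⟨i, hv⟩

end BetaShift

open BetaShift

open Filter Topology

namespace BetaShift

theorem shift_iterate_apply {A : Type*} (x : ℕ → A) (i n : ℕ) :
    (shift^[i] x) n = x (n + i) := by
  induction i generalizing n with
  | zero => rfl
  | succ i ih =>
    rw [Function.iterate_succ_apply', shift, ih]
    ring_nf

theorem SeqLe.apply_zero_le {A : Type*} [LinearOrder A] {x y : ℕ → A} (h : SeqLe x y) :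
    x 0 ≤ y 0 := by
  rcases h with rfl | ⟨i, hpre, hlt⟩
  · exact le_rfl
  · rcases Nat.eq_zero_or_pos i with rfl | hi
    · exact hlt.le
    · exact (hpre 0 hi).le

theorem apply_le_apply_zero_of_seqLe_shift {A : Type*} [LinearOrder A] {d : ℕ → A}
    (hshift : ∀ j, SeqLe (shift^[j] d) d) (i : ℕ) : d i ≤ d 0 := by
  simpa [shift_iterate_apply] using (hshift i).apply_zero_le

noncomputable def betaValue (d : ℕ → ℕ) (β : ℝ) : ℝ :=
  ∑' i, (d i : ℝ) / β ^ (i + 1)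

section BoundedDigits

variable {d : ℕ → ℕ} {C : ℝ}

theorem digit_div_pow_le (hd : ∀ i, (d i : ℝ) ≤ C) {a β : ℝ} (ha : 0 < a) (haβ : a ≤ β)
    (i : ℕ) : (d i : ℝ) / β ^ (i + 1) ≤ C * a⁻¹ ^ (i + 1) := by
  rw [inv_pow, ← div_eq_mul_inv]
  exact div_le_div₀ ((Nat.cast_nonneg _).trans (hd i)) (hd i) (by positivity)
    (pow_le_pow_left₀ ha.le haβ _)

theorem summable_const_mul_inv_pow (C : ℝ) {a : ℝ} (ha : 1 < a) :
    Summable fun i : ℕ => C * a⁻¹ ^ (i + 1) := by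
  simp_rw [pow_succ', ← mul_assoc]
  exact (summable_geometric_of_lt_one (by positivity) (inv_lt_one_of_one_lt₀ ha)).mul_left _

theorem summable_digit_div_pow (hd : ∀ i, (d i : ℝ) ≤ C) {β : ℝ} (hβ : 1 < β) :
    Summable fun i => (d i : ℝ) / β ^ (i + 1) :=
  (summable_const_mul_inv_pow C hβ).of_nonneg_of_le (fun _ => by positivity)
    (digit_div_pow_le hd (by linarith) le_rfl)

theorem continuousOn_betaValue (hd : ∀ i, (d i : ℝ) ≤ C) {a : ℝ} (ha : 1 < a) :
    ContinuousOn (betaValue d) (Set.Ici a) := by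
  refine continuousOn_tsum (fun i => ?_) (summable_const_mul_inv_pow C ha) fun i β hβ => ?_
  · exact continuousOn_const.div (continuousOn_pow _) fun β hβ =>
      pow_ne_zero _ (by linarith [Set.mem_Ici.mp hβ])
  · have hβ0 : 0 < β := by linarith [Set.mem_Ici.mp hβ]
    rw [Real.norm_of_nonneg (by positivity)]
    exact digit_div_pow_le hd (by linarith) hβ i

end BoundedDigits

theorem betaValue_le_one {d : ℕ → ℕ} {β : ℝ} (hβ : 1 < β) (hd : ∀ i, (d i : ℝ) ≤ β - 1) :
    betaValue d β ≤ 1 := by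
  have hgeom : ∑' i : ℕ, (β - 1) * β⁻¹ ^ (i + 1) = 1 := by
    simp_rw [pow_succ', ← mul_assoc]
    rw [tsum_mul_left, tsum_geometric_of_lt_one (by positivity) (inv_lt_one_of_one_lt₀ hβ)]
    field_simp [sub_ne_zero.mpr hβ.ne']
  calc betaValue d β ≤ ∑' i : ℕ, (β - 1) * β⁻¹ ^ (i + 1) :=
        (summable_digit_div_pow hd hβ).tsum_le_tsum (digit_div_pow_le hd (by linarith) le_rfl)
          (summable_const_mul_inv_pow _ hβ)
    _ = 1 := hgeom

theorem eventually_one_lt_betaValue {d : ℕ → ℕ} (hd : ∀ i, d i ≤ d 0) {i₀ : ℕ} (hi₀ : i₀ ≠ 0)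
    (hdi₀ : d i₀ ≠ 0) : ∀ᶠ β in 𝓝[>] (d 0 : ℝ), 1 < betaValue d β := by
  have hd' : ∀ i, (d i : ℝ) ≤ d 0 := fun i => by exact_mod_cast hd i
  have hd₀ : (1 : ℝ) ≤ d 0 := by exact_mod_cast (Nat.pos_of_ne_zero hdi₀).trans_le (hd i₀)
  have hdi₀' : (0 : ℝ) < d i₀ := by exact_mod_cast Nat.pos_of_ne_zero hdi₀
  set g : ℝ → ℝ := fun β => (d 0 : ℝ) / β ^ (0 + 1) + d i₀ / β ^ (i₀ + 1)
  -- at `β = d 0` the first term alone equals `1`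
  have hg : 1 < g (d 0) := by
    simp only [g, zero_add, pow_one, div_self (by linarith : (d 0 : ℝ) ≠ 0)]
    have : (0 : ℝ) < d i₀ / (d 0) ^ (i₀ + 1) := by positivity
    linarith
  have hgc : ContinuousAt g (d 0) := by
    have : (d 0 : ℝ) ≠ 0 := by linarith
    fun_prop (disch := exact pow_ne_zero _ this)
  filter_upwards [(hgc.tendsto.mono_left nhdsWithin_le_nhds).eventually_const_lt hg,
    self_mem_nhdsWithin] with β hgβ hβ
  have hβpos : 0 < β := by linarith [Set.mem_Ioi.mp hβ]
  calc 1 < g β := hgβ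
    _ = ∑ i ∈ {0, i₀}, (d i : ℝ) / β ^ (i + 1) := by
        rw [Finset.sum_pair hi₀.symm]
    _ ≤ betaValue d β := (summable_digit_div_pow hd' (hd₀.trans_lt hβ)).sum_le_tsum _
        fun i _ => by positivity

end BetaShift

open BetaShift

theorem stmt0_general (k : ℕ) (d : ℕ → ℕ)
    (hbd : ∀ i, d i ≤ k) (hattain : ∃ i, d i = k)
    (hshift : ∀ j : ℕ, SeqLe (shift^[j] d) d)
    (hnz : ∀ N : ℕ, ∃ i, N ≤ i ∧ d i ≠ 0) :
    ∃ β : ℝ, (k : ℝ) < β ∧ β ≤ (k : ℝ) + 1 ∧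
      ∑' i : ℕ, (d i : ℝ) / β ^ (i + 1) = 1 := by
  obtain ⟨i, hik⟩ := hattain
  have hd : ∀ i, d i ≤ d 0 := apply_le_apply_zero_of_seqLe_shift hshift
  have hd₀ : d 0 = k := le_antisymm (hbd 0) (hik ▸ hd i)
  obtain ⟨i₀, hi₀, hdi₀⟩ := hnz 1
  have hk : (1 : ℝ) ≤ k := by exact_mod_cast (Nat.pos_of_ne_zero hdi₀).trans_le (hbd i₀)
  have hnear : ∀ᶠ β in 𝓝[>] (k : ℝ), 1 < betaValue d β := by
    simpa [hd₀] using eventually_one_lt_betaValue hd (by omega) hdi₀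
  obtain ⟨β₀, hβ₀, ⟨hkβ₀, hβ₀k⟩⟩ := (hnear.and (Ioc_mem_nhdsGT (lt_add_one (k : ℝ)))).exists
  have hcont : ContinuousOn (betaValue d) (Set.Icc β₀ (k + 1)) :=
    (continuousOn_betaValue (C := k) (fun i => by exact_mod_cast hbd i) (hk.trans_lt hkβ₀)).mono
      Set.Icc_subset_Ici_self
  have hle : betaValue d (k + 1) ≤ 1 :=
    betaValue_le_one (by linarith) fun i => by rw [add_sub_cancel_right]; exact_mod_cast hbd i
  obtain ⟨β, hβ, hβ1⟩ := intermediate_value_Icc' hβ₀k hcont ⟨hle, hβ₀.le⟩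
  exact ⟨β, hkβ₀.trans_le hβ.1, hβ.2, hβ1⟩

/-- there exists `β ∈ (k, k+1]` with `∑ d i / β^(i+1) = 1`. -/
theorem stmt0 (k : ℕ) (hk : 1 ≤ k) (d : ℕ → ℕ)
    (hbd : ∀ i, d i ≤ k) (hattain : ∃ i, d i = k)
    (hshift : ∀ j : ℕ, SeqLe (shift^[j] d) d)
    (hnz : ∀ N : ℕ, ∃ i, N ≤ i ∧ d i ≠ 0) :
    ∃ β : ℝ, (k : ℝ) < β ∧ β ≤ (k : ℝ) + 1 ∧
      ∑' i : ℕ, (d i : ℝ) / β ^ (i + 1) = 1 :=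
  stmt0_general k d hbd hattain hshift hnz
end

section
/- Let d : ℕ → A be admissible and let w ∈ L(X_d) be a word such that for every k with 1 ≤ k ≤ |w|, the k-letter prefix (d)_k is not a suffix of w. Then for every v ∈ L(X_d), the concatenation w ++ v ∈ L(X_d); consequably the follower set satisfies F(w) = L(X_d). -/
open BetaShift

private lemma shift_iter {A : Type*} (x : ℕ → A) (j n : ℕ) :
    (shift^[j] x) n = x (n + j) := by
  induction j generalizing x n with
  | zero => simp
  | succ j ih =>
    rw [Function.iterate_succ_apply, ih]
    show x (n + j + 1) = x (n + (j + 1))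
    rw [Nat.add_assoc]

private lemma getcongr {A : Type*} (w : List A) (a b : ℕ) (hab : a = b) (h : a < w.length) :
    w[a]'h = w[b]'(hab ▸ h) := by subst hab; rfl

/-- Key lemma: if no nonempty prefix of `d` is a suffix of `w`, then for each
start `j < |w|`, the tail of `w` from `j` becomes strictly smaller than `d`
before `w` runs out. -/
private lemma key {m : ℕ} (d : ℕ → Fin m) (w : List (Fin m)) (hw : w ∈ Lang d)
    (hsuf : ∀ k, 1 ≤ k → k ≤ w.length → ¬ prefixWord d k <:+ w)
    (j : ℕ) (hj : j < w.length) :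
    ∃ i0, ∃ h : j + i0 < w.length,
      (∀ t, (ht : t < i0) → w[j + t]'(by omega) = d t) ∧
      (w[j + i0]'h) < d i0 := by
  obtain ⟨y, hy, p, hocc⟩ := hw
  have hsufcon : ¬ (∀ t, (ht : t < w.length - j) → w[j + t]'(by omega) = d t) := by
    intro hall
    apply hsuf (w.length - j) (by omega) (by omega)
    have hdr : prefixWord d (w.length - j) = w.drop j := by
      apply List.ext_getElem
      · simp [prefixWord]
      · intro t h1 h2
        simp only [prefixWord, List.getElem_ofFn, List.getElem_drop]
        simp only [prefixWord, List.length_ofFn] at h1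
        rw [getcongr w (j + t) (j + t) rfl]
        exact (hall t h1).symm
    rw [hdr]; exact List.drop_suffix j w
  have hoccE : ∀ (t : ℕ) (ht : t < w.length), y (p + t) = w[t]'ht := by
    intro t ht
    have := hocc ⟨t, ht⟩
    simpa using this
  rcases hy (p + j) with heq | ⟨i0, hpre, hlt⟩
  · exfalso; apply hsufcon
    intro t ht
    have h1 := congrFun heq t
    rw [shift_iter] at h1
    have h2 := hoccE (j + t) (by omega)
    rw [← h2, ← h1]
    congr 1; omega
  · rw [shift_iter] at hlt
    by_cases hc : j + i0 < w.length
    · refine ⟨i0, hc, ?_, ?_⟩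
      · intro t ht
        have h1 := hpre t ht
        rw [shift_iter] at h1
        have h2 := hoccE (j + t) (by omega)
        rw [← h2, ← h1]
        congr 1; omega
      · have h2 := hoccE (j + i0) hc
        have h3 : y (i0 + (p + j)) = y (p + (j + i0)) := by congr 1; omega
        rw [h3, h2] at hlt
        exact hlt
    · exfalso; apply hsufcon
      intro t ht
      have h1 := hpre t (by omega)
      rw [shift_iter] at h1
      have h2 := hoccE (j + t) (by omega)
      rw [← h2, ← h1]
      congr 1; omega

/-- a word ending in no nonempty prefix of `d` can be followed by anything. -/
theorem stmt1 (m : ℕ) (hm : 1 ≤ m) (d : ℕ → Fin m) (hd : Admissible d)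
    (w : List (Fin m)) (hw : w ∈ Lang d)
    (hsuf : ∀ k, 1 ≤ k → k ≤ w.length → ¬ prefixWord d k <:+ w) :
    (∀ v ∈ Lang d, w ++ v ∈ Lang d) ∧ Fol d w = Lang d := by
  have main : ∀ v ∈ Lang d, w ++ v ∈ Lang d := by
    intro v hv
    obtain ⟨x, hx, i, hocc⟩ := hv
    have hoccE : ∀ (t : ℕ) (ht : t < v.length), x (i + t) = v[t]'ht := by
      intro t ht; simpa using hocc ⟨t, ht⟩
    set n := w.length with hn
    set z : ℕ → Fin m := fun t => if h : t < n then w[t]'h else x (i + (t - n)) with hz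
    refine ⟨z, ?_, 0, ?_⟩
    · -- z ∈ XSet d
      intro j
      by_cases hjn : j < n
      · obtain ⟨i0, h0, hpre, hlt⟩ := key d w hw hsuf j hjn
        right
        refine ⟨i0, ?_, ?_⟩
        · intro t ht
          rw [shift_iter]
          have htj : t + j < n := by omega
          have : z (t + j) = w[t + j]'htj := by simp [hz, htj]
          rw [this, getcongr w (t + j) (j + t) (by omega)]
          exact hpre t ht
        · rw [shift_iter]
          have hij : i0 + j < n := by omega
          have : z (i0 + j) = w[i0 + j]'hij := by simp [hz, hij]
          rw [this, getcongr w (i0 + j) (j + i0) (by omega)]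
          exact hlt
      · have hzz : shift^[j] z = shift^[i + (j - n)] x := by
          funext t
          rw [shift_iter, shift_iter]
          have : ¬ (t + j < n) := by omega
          simp only [hz, this, dif_neg, not_false_iff]
          congr 1; omega
        rw [hzz]; exact hx _
    · -- w ++ v occurs in z at 0
      intro jj
      have hjj : (jj : ℕ) < w.length + v.length := by
        have := jj.2; simpa using this
      rw [List.get_eq_getElem]
      by_cases hc : (jj : ℕ) < n
      · have h1 : z (0 + jj) = w[(jj : ℕ)]'hc := by simp [hz, hc]
        rw [h1, getcongr (w ++ v) _ _ rfl]
        exact (List.getElem_append_left hc).symm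
      · have h1 : z (0 + jj) = x (i + ((jj : ℕ) - n)) := by
          simp only [hz, Nat.zero_add]
          rw [dif_neg hc]
        rw [h1, hoccE ((jj : ℕ) - n) (by omega)]
        rw [getcongr (w ++ v) _ _ rfl]
        exact (List.getElem_append_right (by omega)).symm
  refine ⟨main, ?_⟩
  ext u
  constructor
  · -- Fol d w ⊆ Lang d : factor closure
    intro hu
    obtain ⟨x, hx, p, hocc⟩ := hu
    refine ⟨x, hx, p + w.length, ?_⟩
    intro jj
    have hjj : w.length + (jj : ℕ) < (w ++ u).length := by
      have := jj.2; simp only [List.length_append]; omega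
    have h1 := hocc ⟨w.length + (jj : ℕ), hjj⟩
    simp only [List.get_eq_getElem] at h1 ⊢
    rw [show p + w.length + (jj : ℕ) = p + (w.length + (jj : ℕ)) by omega, h1]
    rw [List.getElem_append_right (by omega)]
    exact getcongr u _ _ (by omega) _
  · intro hu
    exact main u hu
end

section
/- Let d : ℕ → A be admissible. Then for every n ∈ ℕ, the number of distinct follower sets of words of length n in X_d satisfies |F(n)| ≤ n + 1. -/
open BetaShift

/-
The follower set of a word `w ∈ L(X_d)` of length `n` depends only on the longest prefix `d_k`
(`k ≤ n`) of `d` that is a suffix of `w`: `F(w) = F(d_k)`. One inclusion holds because the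
language is closed under suffixes. For the other, write `w = t d_k`: every suffix of `w` starting
inside `t` is longer than `d_k` yet not a prefix of `d`, so its lexicographic comparison with `d`
is decided strictly inside `w`, whatever follows. Hence the follower sets of words of length `n`
are among `F(d_0), …, F(d_n)`.
-/

namespace BetaShift

open Stream'

section Sequences

variable {A : Type*}

theorem shift_iterate_eq_drop (i : ℕ) (x : Stream' A) : shift^[i] x = drop i x := by
  induction i generalizing x with
  | zero => rfl
  | succ i ih => exact ih (tail x)

theorem drop_append_stream_of_le {i : ℕ} {v : List A} (h : i ≤ v.length) (s : Stream' A) :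
    drop i (v ++ₛ s) = v.drop i ++ₛ s := by
  conv_lhs => rw [← List.take_append_drop i v, append_append_stream]
  simpa [h] using drop_append_stream (v.take i) (v.drop i ++ₛ s)

theorem occurs_iff_exists_drop_eq_append {w : List A} {x : Stream' A} :
    Occurs w x ↔ ∃ i y, drop i x = w ++ₛ y := by
  constructor
  · rintro ⟨i, hi⟩
    have htake : take w.length (drop i x) = w :=
      List.ext_getElem (length_take _ _) fun j _ hj => by
        rw [take_get, get_drop]; exact hi ⟨j, hj⟩
    refine ⟨i, drop w.length (drop i x), ?_⟩
    conv_lhs => rw [← append_take_drop w.length (drop i x), htake]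
  · rintro ⟨i, y, hxy⟩
    refine ⟨i, fun j => ?_⟩
    rw [List.get_eq_getElem, ← get_append_left j w y j.isLt, ← hxy, get_drop]
    rfl

theorem eq_prefixWord_length_iff {v : List A} {d : ℕ → A} :
    v = prefixWord d v.length ↔ ∀ j (hj : j < v.length), v[j] = d j := by
  refine ⟨fun h j hj => ?_, fun h => List.ext_getElem (by simp [prefixWord]) ?_⟩
  · rw [List.getElem_of_eq h]; simp [prefixWord]
  · intro j hj _; simp [prefixWord, h j hj]

theorem SeqLe.append_of_ne_prefixWord [LinearOrder A] {v : List A} {y : Stream' A} {d : ℕ → A}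
    (h : SeqLe (v ++ₛ y) d) (hv : v ≠ prefixWord d v.length) (z : Stream' A) :
    SeqLe (v ++ₛ z) d := by
  have get_append {s : Stream' A} {j : ℕ} (hj : j < v.length) : (v ++ₛ s) j = v[j] :=
    get_append_left j v s hj
  rw [Ne, eq_prefixWord_length_iff] at hv
  rcases h with rfl | ⟨i, hagree, hlt⟩
  · exact absurd (fun j hj => (get_append hj).symm) hv
  · by_cases hi : i < v.length
    · refine Or.inr ⟨i, fun j hj => ?_, ?_⟩
      · rw [get_append (hj.trans hi), ← hagree j hj, get_append (hj.trans hi)]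
      · rwa [get_append hi, ← get_append (s := y) hi]
    · exact absurd (fun j hj => (get_append hj).symm.trans (hagree j (by omega))) hv

end Sequences

section ClassIndex

variable {m : ℕ} (d : ℕ → Fin m) (n : ℕ) (v : List (Fin m))

theorem classIndex_le : classIndex d n v ≤ n :=
  Nat.findGreatest_le n

theorem prefixWord_classIndex_suffix : prefixWord d (classIndex d n v) <:+ v :=
  Nat.findGreatest_spec (P := fun k => prefixWord d k <:+ v) (Nat.zero_le n)
    (by simp [prefixWord])

variable {d n v} in
theorem le_classIndex {c : ℕ} (hc : c ≤ n) (hs : prefixWord d c <:+ v) :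
    c ≤ classIndex d n v :=
  Nat.le_findGreatest hc hs

end ClassIndex

variable {m : ℕ} {d : ℕ → Fin m}

theorem mem_XSet_iff {x : Stream' (Fin m)} : x ∈ XSet d ↔ ∀ i, SeqLe (drop i x) d :=
  forall_congr' fun i => by rw [shift_iterate_eq_drop]

theorem drop_mem_XSet {x : Stream' (Fin m)} (hx : x ∈ XSet d) (i : ℕ) : drop i x ∈ XSet d :=
  mem_XSet_iff.2 fun j => by rw [drop_drop]; exact mem_XSet_iff.1 hx (i + j)

theorem append_mem_XSet {t : List (Fin m)} {s : Stream' (Fin m)} (hs : s ∈ XSet d)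
    (ht : ∀ i < t.length, SeqLe (drop i (t ++ₛ s)) d) : t ++ₛ s ∈ XSet d := by
  refine mem_XSet_iff.2 fun i => ?_
  by_cases hi : i < t.length
  · exact ht i hi
  · obtain ⟨j, rfl⟩ := Nat.exists_eq_add_of_le (not_lt.1 hi)
    rw [← drop_drop, drop_append_stream]
    exact mem_XSet_iff.1 hs j

theorem mem_lang_iff {w : List (Fin m)} : w ∈ Lang d ↔ ∃ y, w ++ₛ y ∈ XSet d := by
  constructor
  · rintro ⟨x, hx, hocc⟩
    obtain ⟨i, y, hxy⟩ := occurs_iff_exists_drop_eq_append.1 hocc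
    exact ⟨y, hxy ▸ drop_mem_XSet hx i⟩
  · rintro ⟨y, hy⟩
    exact ⟨_, hy, occurs_iff_exists_drop_eq_append.2 ⟨0, y, rfl⟩⟩

theorem mem_lang_of_append_mem {s v : List (Fin m)} (h : s ++ v ∈ Lang d) : v ∈ Lang d := by
  obtain ⟨y, hy⟩ := mem_lang_iff.1 h
  rw [append_append_stream] at hy
  have hv := drop_mem_XSet hy s.length
  rw [drop_append_stream] at hv
  exact mem_lang_iff.2 ⟨y, hv⟩

theorem append_mem_lang {w p u : List (Fin m)} (hw : w ∈ Lang d) (hpw : p <:+ w)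
    (hpu : p ++ u ∈ Lang d)
    (hmax : ∀ c, p.length < c → c ≤ w.length → ¬prefixWord d c <:+ w) :
    w ++ u ∈ Lang d := by
  obtain ⟨t, rfl⟩ := hpw
  obtain ⟨y, hy⟩ := mem_lang_iff.1 hpu
  obtain ⟨y', hy'⟩ := mem_lang_iff.1 hw
  rw [append_append_stream] at hy
  refine mem_lang_iff.2 ⟨y, ?_⟩
  rw [append_append_stream, append_append_stream]
  refine append_mem_XSet hy fun i hi => ?_
  have hle : i ≤ (t ++ p).length := by simp only [List.length_append]; omega
  have hnot_prefix : (t ++ p).drop i ≠ prefixWord d ((t ++ p).drop i).length := fun h =>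
    hmax _ (by simp only [List.length_drop, List.length_append]; omega)
      (by simp only [List.length_drop]; omega) (h ▸ List.drop_suffix i _)
  have hcmp := mem_XSet_iff.1 hy' i
  rw [drop_append_stream_of_le hle] at hcmp
  rw [← append_append_stream, drop_append_stream_of_le hle]
  exact hcmp.append_of_ne_prefixWord hnot_prefix _

theorem fol_eq_fol_prefixWord_classIndex {w : List (Fin m)} (hw : w ∈ Lang d) :
    Fol d w = Fol d (prefixWord d (classIndex d w.length w)) := by
  obtain ⟨t, ht⟩ := prefixWord_classIndex_suffix d w.length w
  ext u
  refine ⟨fun hu => mem_lang_of_append_mem (s := t) ?_,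
    fun hu => append_mem_lang hw ⟨t, ht⟩ hu fun c hc hcw hs => ?_⟩
  · rwa [← List.append_assoc, ht]
  · have hc_le := le_classIndex hcw hs
    simp only [prefixWord, List.length_ofFn] at hc
    omega

theorem folCount_le (n : ℕ) : FolCount d n ≤ n + 1 := by
  have hsub : {S | ∃ w ∈ Lang d, w.length = n ∧ S = Fol d w} ⊆
      (fun k => Fol d (prefixWord d k)) '' Set.Iic n := by
    rintro S ⟨w, hw, rfl, rfl⟩
    exact ⟨_, classIndex_le d w.length w, (fol_eq_fol_prefixWord_classIndex hw).symm⟩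
  calc FolCount d n ≤ ((fun k => Fol d (prefixWord d k)) '' Set.Iic n).ncard :=
        Set.ncard_le_ncard hsub ((Set.finite_Iic n).image _)
    _ ≤ (Set.Iic n).ncard := Set.ncard_image_le (Set.finite_Iic n)
    _ = n + 1 := Set.ncard_Iic_nat n

end BetaShift

theorem stmt2_general (m : ℕ) (d : ℕ → Fin m) (n : ℕ) :
    FolCount d n ≤ n + 1 :=
  folCount_le n

/-- `|F(n)| ≤ n + 1` for every `n`. -/
theorem stmt2 (m : ℕ) (hm : 1 ≤ m) (d : ℕ → Fin m) (hd : Admissible d) (n : ℕ) :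
    FolCount d n ≤ n + 1 :=
  stmt2_general m d n
end

section
/- Let d : ℕ → A satisfy σ^i d ⪯ d for every i ∈ ℕ. Suppose k < j and the k-letter prefix of d appears as a suffix of the j-letter prefix of d, i.e. d (j − k + i) = d i for all i < k. Then σ^j d ⪯ σ^k d. -/
open BetaShift


lemma shift_iter_apply {A : Type*} (d : ℕ → A) (i n : ℕ) :
    (BetaShift.shift^[i] d) n = d (n + i) := by
  induction i generalizing n with
  | zero => rfl
  | succ i ih =>
    rw [Function.iterate_succ_apply']
    show (BetaShift.shift^[i] d) (n+1) = _
    rw [ih]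
    ring_nf

/-- nested prefixes-as-suffixes give `σ^j d ⪯ σ^k d`. -/
theorem stmt5 (m : ℕ) (hm : 1 ≤ m) (d : ℕ → Fin m)
    (hshift : ∀ i : ℕ, SeqLe (shift^[i] d) d) (k j : ℕ) (hkj : k < j)
    (hsuffix : ∀ i, i < k → d (j - k + i) = d i) :
    SeqLe (shift^[j] d) (shift^[k] d) := by
  rcases hshift (j - k) with h | ⟨i, hpre, hlt⟩
  · left
    funext n
    rw [shift_iter_apply, shift_iter_apply]
    have := congrFun h (k + n)
    rw [shift_iter_apply] at this
    have e : k + n + (j - k) = n + j := by omega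
    rw [e] at this
    rw [this]; ring_nf
  · rw [shift_iter_apply] at hlt
    have hik : k ≤ i := by
      by_contra hik
      push_neg at hik
      have := hsuffix i hik
      rw [add_comm] at hlt
      exact absurd this (ne_of_lt hlt)
    right
    refine ⟨i - k, ?_, ?_⟩
    · intro n hn
      rw [shift_iter_apply, shift_iter_apply]
      have := hpre (k + n) (by omega)
      rw [shift_iter_apply] at this
      have e : k + n + (j - k) = n + j := by omega
      rw [e] at this
      rw [this]; ring_nf
    · rw [shift_iter_apply, shift_iter_apply]
      have e1 : i - k + j = i + (j - k) := by omega
      have e2 : i - k + k = i := by omega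
      rw [e1, e2]
      exact hlt
end

section
/- Let d : ℕ → A be admissible, let n ≥ 1, and let w, v ∈ L_n(X_d). Let j be the largest t ≤ n such that (d)_t is a suffix of w, and let k be the largest t ≤ n such that (d)_t is a suffix of v. Then F(w) = F(v) if and only if σ^j d = σ^k d. -/
namespace BetaShift

variable {A : Type*}

variable {m : ℕ}

namespace Stmt7Aux

variable {m : ℕ}

lemma shift_iter_apply (x : ℕ → Fin m) (i n : ℕ) : (shift^[i] x) n = x (n + i) := by
  induction i generalizing n with
  | zero => rfl
  | succ k ih =>
    rw [Function.iterate_succ_apply', shift, ih]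
    congr 1
    omega

lemma seqLe_iff {x y : ℕ → Fin m} :
    SeqLe x y ↔ ∀ i, (∀ j, j < i → x j = y j) → x i ≤ y i := by
  constructor
  · rintro (rfl | ⟨i, hpre, hlt⟩) p hp
    · exact le_rfl
    · rcases lt_trichotomy p i with h | rfl | h
      · exact (hpre p h).le
      · exact hlt.le
      · exact absurd (hp i h) hlt.ne
  · intro h
    by_cases hxy : x = y
    · exact Or.inl hxy
    · right
      have hex : ∃ i, x i ≠ y i := by
        by_contra hc; push_neg at hc; exact hxy (funext hc)
      classical
      have hpre : ∀ j, j < Nat.find hex → x j = y j := fun j hj => by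
        by_contra hne'; exact (Nat.find_min hex hj) hne'
      exact ⟨Nat.find hex, hpre,
        lt_of_le_of_ne (h _ hpre) (Nat.find_spec hex)⟩

variable (d : ℕ → Fin m)

/-- every suffix of `w` is lexicographically `≤` the corresponding prefix of `d`. -/
def SC (w : List (Fin m)) : Prop :=
  ∀ i p, i + p < w.length → (∀ q, q < p → w.getD (i+q) (d 0) = d q) →
    w.getD (i+p) (d 0) ≤ d p

/-- The word `u` is lexicographically `≤` the sequence `e`. -/
def WLE (e : ℕ → Fin m) (u : List (Fin m)) : Prop :=
  ∀ p, p < u.length → (∀ q, q < p → u.getD q (d 0) = e q) → u.getD p (d 0) ≤ e p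

def cat (w : List (Fin m)) (x : ℕ → Fin m) : ℕ → Fin m :=
  fun i => if h : i < w.length then w.get ⟨i, h⟩ else x (i - w.length)

lemma cat_lt (w : List (Fin m)) (x : ℕ → Fin m) {i : ℕ} (h : i < w.length) :
    cat w x i = w.getD i (d 0) := by
  rw [cat, dif_pos h, List.getD_eq_getElem _ _ h, List.get_eq_getElem]

lemma cat_ge (w : List (Fin m)) (x : ℕ → Fin m) {i : ℕ} (h : w.length ≤ i) :
    cat w x i = x (i - w.length) := by
  rw [cat, dif_neg (by omega)]

lemma getD_append_lt (w u : List (Fin m)) (z : Fin m) {i : ℕ} (h : i < w.length) :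
    (w ++ u).getD i z = w.getD i z := by
  rw [List.getD_eq_getElem _ _ (by simp; omega), List.getD_eq_getElem _ _ h,
    List.getElem_append_left h]

lemma getD_append_ge (w u : List (Fin m)) (z : Fin m) {i : ℕ} (h : w.length ≤ i) :
    (w ++ u).getD i z = u.getD (i - w.length) z := by
  by_cases h2 : i - w.length < u.length
  · rw [List.getD_eq_getElem _ _ (by simp; omega), List.getD_eq_getElem _ _ h2,
      List.getElem_append_right h]
  · rw [List.getD_eq_default _ _ (by simp; omega), List.getD_eq_default _ _ (by omega)]

lemma getD_ofFn {k : ℕ} (f : Fin k → Fin m) (z : Fin m) {i : ℕ} (h : i < k) :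
    (List.ofFn f).getD i z = f ⟨i, h⟩ := by
  rw [List.getD_eq_getElem _ _ (by simpa using h), List.getElem_ofFn]

lemma prefixWord_suffix_iff {t : ℕ} {w : List (Fin m)} (ht : t ≤ w.length) :
    prefixWord d t <:+ w ↔ ∀ q, q < t → w.getD (w.length - t + q) (d 0) = d q := by
  constructor
  · rintro ⟨s, rfl⟩ q hq
    have hlen : (s ++ prefixWord d t).length = s.length + t := by
      simp [prefixWord]
    rw [hlen]
    have : s.length + t - t + q = s.length + q := by omega
    rw [this, getD_append_ge _ _ _ (by omega)]
    have : s.length + q - s.length = q := by omega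
    rw [this, prefixWord, getD_ofFn _ _ hq]
  · intro h
    refine ⟨w.take (w.length - t), ?_⟩
    have hpre : prefixWord d t = w.drop (w.length - t) := by
      apply List.ext_getElem
      · simp [prefixWord]; omega
      · intro i h1 h2
        rw [List.getElem_drop]
        have hi : i < t := by simpa [prefixWord] using h1
        have := h i hi
        rw [List.getD_eq_getElem _ _ (by omega)] at this
        simp only [prefixWord, List.getElem_ofFn]
        simpa using this.symm
    rw [hpre, List.take_append_drop]


lemma shift_seqLe_of_suffixes (hd : Admissible d) {w : List (Fin m)} {a b : ℕ}
    (hab : a ≤ b) (hbw : b ≤ w.length)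
    (ha : prefixWord d a <:+ w) (hb : prefixWord d b <:+ w) :
    SeqLe (shift^[b] d) (shift^[a] d) := by
  have haw := (prefixWord_suffix_iff d (le_trans hab hbw)).1 ha
  have hbw' := (prefixWord_suffix_iff d hbw).1 hb
  have key : ∀ q, q < a → d (b - a + q) = d q := by
    intro q hq
    have h1 := hbw' (b - a + q) (by omega)
    have h2 := haw q hq
    have e : w.length - b + (b - a + q) = w.length - a + q := by omega
    rw [e, h2] at h1
    exact h1.symm
  rw [seqLe_iff]
  intro p hp
  simp only [shift_iter_apply] at hp ⊢
  have hadm := (seqLe_iff).1 (hd.1 (b - a)) (a + p)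
  simp only [shift_iter_apply] at hadm
  have hconc : d (a + p + (b - a)) ≤ d (a + p) := by
    apply hadm
    intro j hj
    by_cases hja : j < a
    · rw [show j + (b - a) = b - a + j by omega]; exact key j hja
    · have := hp (j - a) (by omega)
      rw [show j - a + b = j + (b - a) by omega, show j - a + a = j by omega] at this
      exact this
  rw [show a + p + (b - a) = p + b by omega, show a + p = p + a by omega] at hconc
  exact hconc

lemma sc_of_mem {w : List (Fin m)} (hw : w ∈ Lang d) : SC d w := by
  obtain ⟨x, hx, i0, hocc⟩ := hw
  have hxw : ∀ j, j < w.length → x (i0 + j) = w.getD j (d 0) := by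
    intro j hj
    rw [hocc ⟨j, hj⟩, List.get_eq_getElem, List.getD_eq_getElem _ _ hj]
  intro i p hip hpre
  have := (seqLe_iff).1 (hx (i0 + i)) p
  simp only [shift_iter_apply] at this
  have hconc : x (p + (i0 + i)) ≤ d p := by
    apply this
    intro q hq
    rw [show q + (i0 + i) = i0 + (i + q) by omega, hxw (i + q) (by omega)]
    exact hpre q hq
  rw [show p + (i0 + i) = i0 + (i + p) by omega, hxw (i + p) hip] at hconc
  exact hconc

lemma classIndex_le (n : ℕ) (w : List (Fin m)) : classIndex d n w ≤ n :=
  Nat.findGreatest_le n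

lemma classIndex_suffix (n : ℕ) (w : List (Fin m)) :
    prefixWord d (classIndex d n w) <:+ w := by
  exact Nat.findGreatest_spec (P := fun k => prefixWord d k <:+ w) (m := 0)
    (Nat.zero_le n) (by simp [prefixWord])

lemma le_classIndex {n t : ℕ} {w : List (Fin m)} (htn : t ≤ n)
    (h : prefixWord d t <:+ w) : t ≤ classIndex d n w :=
  Nat.le_findGreatest (P := fun k => prefixWord d k <:+ w) htn h

lemma cat_mem (hd : Admissible d) {w : List (Fin m)} (hsc : SC d w) :
    cat w (shift^[classIndex d w.length w] d) ∈ XSet d := by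
  set n := w.length with hn
  set J := classIndex d n w with hJ
  have hJn : J ≤ n := classIndex_le d n w
  have hJs : prefixWord d J <:+ w := classIndex_suffix d n w
  set x := cat w (shift^[J] d) with hxdef
  intro i
  rw [seqLe_iff]
  intro p hp
  simp only [shift_iter_apply] at hp ⊢
  by_cases hi : n ≤ i
  · -- entirely in the tail
    have hx' : ∀ q, x (q + i) = d (J + (i - n) + q) := by
      intro q
      rw [hxdef, cat_ge _ _ (by omega), shift_iter_apply]
      congr 1; omega
    have hadm := (seqLe_iff).1 (hd.1 (J + (i - n))) p
    simp only [shift_iter_apply] at hadm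
    rw [hx' p]
    rw [show p + (J + (i - n)) = J + (i - n) + p by omega] at hadm
    apply hadm
    intro q hq
    rw [show q + (J + (i - n)) = J + (i - n) + q by omega, ← hx' q]
    exact hp q hq
  · push_neg at hi
    by_cases hpn : i + p < n
    · -- entirely inside w
      have hx' : ∀ q, q ≤ p → x (q + i) = w.getD (i + q) (d 0) := by
        intro q hq
        rw [hxdef, cat_lt d _ _ (by omega)]
        congr 1; omega
      rw [hx' p le_rfl]
      apply hsc i p hpn
      intro q hq
      rw [← hx' q (by omega)]
      exact hp q hq
    · push_neg at hpn
      set t := n - i with ht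
      have htp : t ≤ p := by omega
      have hts : prefixWord d t <:+ w := by
        rw [prefixWord_suffix_iff d (by omega)]
        intro q hq
        have := hp q (by omega)
        rw [hxdef, cat_lt d _ _ (by omega)] at this
        rw [show n - t + q = q + i by omega]
        exact this
      have htJ : t ≤ J := le_classIndex d (by omega) hts
      have hcmp := shift_seqLe_of_suffixes d hd htJ hJn hts hJs
      have hx' : ∀ q, t ≤ q → x (q + i) = d (J + (q - t)) := by
        intro q hq
        rw [hxdef, cat_ge _ _ (by omega), shift_iter_apply]
        congr 1; omega
      have hcmp' := (seqLe_iff).1 hcmp (p - t)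
      simp only [shift_iter_apply] at hcmp'
      have hconc : d (p - t + J) ≤ d (p - t + t) := by
        apply hcmp'
        intro r hr
        have h1 := hp (r + t) (by omega)
        rw [hx' (r + t) (by omega)] at h1
        rw [show r + J = J + (r + t - t) by omega, h1]
      calc x (p + i) = d (p - t + J) := by rw [hx' p htp]; congr 1; omega
        _ ≤ d (p - t + t) := hconc
        _ = d p := by congr 1; omega

lemma lang_iff_sc (hd : Admissible d) (w : List (Fin m)) :
    w ∈ Lang d ↔ SC d w := by
  refine ⟨sc_of_mem d, fun hsc => ?_⟩
  refine ⟨cat w (shift^[classIndex d w.length w] d), cat_mem d hd hsc, 0, fun j => ?_⟩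
  rw [Nat.zero_add, cat, dif_pos j.isLt]

lemma wle_trans_seqLe {e f : ℕ → Fin m} {u : List (Fin m)} (h1 : WLE d e u)
    (h2 : SeqLe e f) {p : ℕ} (hp : p < u.length)
    (hpre : ∀ r, r < p → u.getD r (d 0) = f r) :
    u.getD p (d 0) ≤ f p := by
  classical
  by_cases hall : ∀ r, r < p → u.getD r (d 0) = e r
  · have h3 : ∀ r, r < p → e r = f r := fun r hr => (hall r hr).symm.trans (hpre r hr)
    exact le_trans (h1 p hp hall) ((seqLe_iff).1 h2 p h3)
  · exfalso
    push_neg at hall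
    have hex : ∃ r, r < p ∧ u.getD r (d 0) ≠ e r := hall
    set r0 := Nat.find hex with hr0def
    obtain ⟨hr0p, hr0ne⟩ := Nat.find_spec hex
    have hmin : ∀ r, r < r0 → u.getD r (d 0) = e r := by
      intro r hr
      by_contra hc
      exact (Nat.find_min hex hr) ⟨by omega, hc⟩
    have hle1 : u.getD r0 (d 0) ≤ e r0 := h1 r0 (by omega) hmin
    have hle2 : e r0 ≤ f r0 := (seqLe_iff).1 h2 r0 (fun r hr =>
      (hmin r hr).symm.trans (hpre r (by omega)))
    have hle3 : e r0 ≤ u.getD r0 (d 0) := (hpre r0 hr0p) ▸ hle2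
    exact hr0ne (le_antisymm hle1 hle3)

lemma fol_iff (hd : Admissible d) {w : List (Fin m)} (hw : w ∈ Lang d)
    (u : List (Fin m)) :
    u ∈ Fol d w ↔ SC d u ∧ WLE d (shift^[classIndex d w.length w] d) u := by
  set n := w.length with hn
  set J := classIndex d n w with hJ
  have hJn : J ≤ n := classIndex_le d n w
  have hJs : prefixWord d J <:+ w := classIndex_suffix d n w
  have hJg := (prefixWord_suffix_iff d hJn).1 hJs
  constructor
  · intro hu
    have hsc' : SC d (w ++ u) := sc_of_mem d hu
    constructor
    · intro i p hip hpre
      have := hsc' (n + i) p (by simp; omega) ?_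
      · rwa [show n + i + p = n + (i + p) by omega,
          getD_append_ge _ _ _ (by omega), show n + (i + p) - n = i + p by omega] at this
      · intro q hq
        rw [show n + i + q = n + (i + q) by omega, getD_append_ge _ _ _ (by omega),
          show n + (i + q) - n = i + q by omega]
        exact hpre q hq
    · intro p hp hpre
      simp only [shift_iter_apply] at hpre ⊢
      have := hsc' (n - J) (J + p) (by simp; omega) ?_
      · rwa [show n - J + (J + p) = n + p by omega, getD_append_ge _ _ _ (by omega),
          show n + p - n = p by omega, show J + p = p + J by omega] at this
      · intro q hq
        by_cases hqJ : q < J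
        · rw [show n - J + q = n - J + q by rfl, getD_append_lt _ _ _ (by omega)]
          exact hJg q hqJ
        · rw [show n - J + q = n + (q - J) by omega, getD_append_ge _ _ _ (by omega),
            show n + (q - J) - n = q - J by omega]
          have := hpre (q - J) (by omega)
          rw [this]
          congr 1; omega
  · rintro ⟨hscu, hwle⟩
    rw [Fol, Set.mem_setOf_eq, lang_iff_sc d hd]
    intro i p hip hpre
    simp only [List.length_append] at hip
    by_cases hc1 : i + p < n
    · -- inside w
      rw [getD_append_lt _ _ _ hc1]
      apply sc_of_mem d hw i p hc1
      intro q hq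
      have := hpre q hq
      rwa [getD_append_lt _ _ _ (by omega)] at this
    · push_neg at hc1
      by_cases hc2 : n ≤ i
      · -- inside u
        rw [getD_append_ge _ _ _ (by omega)]
        have := hscu (i - n) p (by omega) ?_
        · rwa [show i + p - n = i - n + p by omega]
        · intro q hq
          have := hpre q hq
          rwa [getD_append_ge _ _ _ (by omega), show i + q - n = i - n + q by omega] at this
      · push_neg at hc2
        set t := n - i with ht
        have htp : t ≤ p := by omega
        have hts : prefixWord d t <:+ w := by
          rw [prefixWord_suffix_iff d (by omega)]
          intro q hq
          have := hpre q (by omega)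
          rwa [getD_append_lt _ _ _ (by omega), show i + q = n - t + q by omega] at this
        have htJ : t ≤ J := le_classIndex d (by omega) hts
        have hcmp := shift_seqLe_of_suffixes d hd htJ hJn hts hJs
        have hpre' : ∀ r, r < p - t → u.getD r (d 0) = (shift^[t] d) r := by
          intro r hr
          have := hpre (r + t) (by omega)
          rw [getD_append_ge _ _ _ (by omega), show i + (r + t) - n = r by omega] at this
          rw [this, shift_iter_apply]
        have := wle_trans_seqLe d hwle hcmp (p := p - t) (by omega) hpre'
        rw [shift_iter_apply] at this
        rw [getD_append_ge _ _ _ (by omega), show i + p - n = p - t by omega]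
        rw [show p - t + t = p by omega] at this
        exact this


lemma not_lt_key (hd : Admissible d) {w v : List (Fin m)} (hw : w ∈ Lang d)
    (hv : v ∈ Lang d) (hF : Fol d w = Fol d v) {p : ℕ}
    (hpre : ∀ q, q < p →
      (shift^[classIndex d w.length w] d) q = (shift^[classIndex d v.length v] d) q) :
    ¬ (shift^[classIndex d w.length w] d) p < (shift^[classIndex d v.length v] d) p := by
  intro hlt
  set J := classIndex d w.length w with hJ
  set K := classIndex d v.length v with hK
  set u : List (Fin m) := List.ofFn (fun i : Fin (p+1) => d (K + i)) with hu
  have hulen : u.length = p + 1 := by simp [hu]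
  have huget : ∀ q, q < p + 1 → u.getD q (d 0) = d (q + K) := by
    intro q hq
    rw [hu, getD_ofFn _ _ hq]
    show d (K + q) = d (q + K)
    congr 1; omega
  have humem : u ∈ Fol d v := by
    rw [fol_iff d hd hv]
    constructor
    · intro i p' hip' hpre'
      rw [hulen] at hip'
      have hadm := (seqLe_iff).1 (hd.1 (K + i)) p'
      simp only [shift_iter_apply] at hadm
      rw [huget (i + p') (by omega), show i + p' + K = p' + (K + i) by omega]
      apply hadm
      intro q hq
      rw [show q + (K + i) = i + q + K by omega, ← huget (i + q) (by omega)]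
      exact hpre' q hq
    · intro p' hp' _
      rw [hulen] at hp'
      rw [huget p' hp', shift_iter_apply, show p' + K = p' + K by rfl]
  have humem' : u ∈ Fol d w := hF ▸ humem
  rw [fol_iff d hd hw] at humem'
  have hconc := humem'.2 p (by omega) ?_
  · rw [huget p (by omega)] at hconc
    simp only [shift_iter_apply] at hlt
    exact absurd hconc (not_le.2 (by simpa [shift_iter_apply] using hlt))
  · intro q hq
    rw [huget q (by omega)]
    have h' := (hpre q hq).symm
    simp only [shift_iter_apply] at h' ⊢
    exact h'

end Stmt7Aux
end BetaShift

open BetaShift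

/-- `F(w) = F(v)` iff `σ^j d = σ^k d`, where `j, k` are the largest
`t ≤ n` such that `(d)_t` is a suffix of `w` resp. `v`. -/
theorem stmt7 (m : ℕ) (hm : 1 ≤ m) (d : ℕ → Fin m) (hd : Admissible d)
    (n : ℕ) (hn : 1 ≤ n) (w v : List (Fin m)) (hw : w ∈ Lang d) (hv : v ∈ Lang d)
    (hwl : w.length = n) (hvl : v.length = n) :
    Fol d w = Fol d v ↔ shift^[classIndex d n w] d = shift^[classIndex d n v] d := by
  have hJ : classIndex d n w = classIndex d w.length w := by rw [hwl]
  have hK : classIndex d n v = classIndex d v.length v := by rw [hvl]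
  rw [hJ, hK]
  constructor
  · intro hF
    funext p
    induction p using Nat.strong_induction_on with
    | _ p ih =>
      have h1 := Stmt7Aux.not_lt_key d hd hw hv hF (p := p) (fun q hq => ih q hq)
      have h2 := Stmt7Aux.not_lt_key d hd hv hw hF.symm (p := p)
        (fun q hq => (ih q hq).symm)
      exact le_antisymm (not_lt.1 h2) (not_lt.1 h1)
  · intro hshift
    exact Set.ext fun u => by
      rw [Stmt7Aux.fol_iff d hd hw, Stmt7Aux.fol_iff d hd hv, hshift]
end

section
/- Let d : ℕ → A be admissible, let s ∈ L(X_d), and let k be the largest t ≤ |s| such that (d)_t is a suffix of s. Let n ≥ 1 and let w ∈ L_n(X_d). Then s ++ w ∈ L(X_d) if and only if w is lexicographically less than or equal to the word d k, d (k+1), …, d (k+n−1) (the n-letter prefix of σ^k d), where for words of equal length u ⪯ u' means u = u' or at the first index where they differ u takes the smaller value. -/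
open BetaShift

/-- Word ≤ sequence comparison. -/
def WLe {m : ℕ} (u : List (Fin m)) (e : ℕ → Fin m) : Prop :=
  (∀ i (h : i < u.length), u[i] = e i) ∨
  ∃ i, ∃ _ : i < u.length,
    (∀ j (hj : j < u.length), j < i → u[j] = e j) ∧ u[i] < e i

lemma shift_iter_s10 {m : ℕ} (x : ℕ → Fin m) (i : ℕ) : shift^[i] x = fun n => x (i + n) := by
  induction i with
  | zero => simp
  | succ i ih =>
    rw [Function.iterate_succ_apply', ih]
    funext n
    simp [shift, Nat.add_assoc, Nat.add_comm 1 n, Nat.succ_add]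

lemma wle_of_seqLe {m : ℕ} {u : List (Fin m)} {y d : ℕ → Fin m}
    (hy : SeqLe y d) (hu : ∀ j (hj : j < u.length), u[j] = y j) : WLe u d := by
  rcases hy with rfl | ⟨i, hagree, hlt⟩
  · exact Or.inl hu
  · by_cases h : i < u.length
    · exact Or.inr ⟨i, h, fun j hj hji => (hu j hj).trans (hagree j hji), (hu i h) ▸ hlt⟩
    · exact Or.inl fun j hj => (hu j hj).trans (hagree j (lt_of_lt_of_le hj (not_lt.1 h)))

/-- Transitivity: word ≤ e and e ≤ f gives word ≤ f. -/
lemma wle_trans {m : ℕ} {u : List (Fin m)} {e f : ℕ → Fin m}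
    (h1 : WLe u e) (h2 : SeqLe e f) : WLe u f := by
  rcases h2 with rfl | ⟨i', hag', hlt'⟩
  · exact h1
  rcases h1 with hag | ⟨i, hi, hag, hlt⟩
  · by_cases h : i' < u.length
    · exact Or.inr ⟨i', h, fun j hj hji => (hag j hj).trans (hag' j hji),
        (hag i' h) ▸ hlt'⟩
    · exact Or.inl fun j hj => (hag j hj).trans (hag' j (lt_of_lt_of_le hj (not_lt.1 h)))
  · rcases lt_trichotomy i' i with hc | heq | hc
    · refine Or.inr ⟨i', lt_trans hc hi, fun j hj hji => (hag j hj (lt_trans hji hc)).trans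
        (hag' j hji), ?_⟩
      rw [hag i' (lt_trans hc hi) hc]; exact hlt'
    · subst heq
      exact Or.inr ⟨i', hi, fun j hj hji => (hag j hj hji).trans (hag' j hji),
        lt_trans hlt hlt'⟩
    · exact Or.inr ⟨i, hi, fun j hj hji => (hag j hj hji).trans (hag' j (lt_trans hji hc)),
        hlt.trans_eq (hag' i hc)⟩

lemma prefixWord_length {m : ℕ} (d : ℕ → Fin m) (k : ℕ) : (prefixWord d k).length = k := by
  simp [prefixWord]

lemma prefixWord_getElem {m : ℕ} (d : ℕ → Fin m) (k j : ℕ) (h : j < (prefixWord d k).length) :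
    (prefixWord d k)[j] = d j := by
  simp [prefixWord]

/-- Two prefixes both suffixes of `v`: the shorter sits inside the longer. -/
lemma suffix_fact {m : ℕ} {d : ℕ → Fin m} {v : List (Fin m)} {a b : ℕ}
    (ha : prefixWord d a <:+ v) (hb : prefixWord d b <:+ v) (hab : a ≤ b) :
    ∀ j, j < a → d j = d (b - a + j) := by
  have hsub : prefixWord d a <:+ prefixWord d b := by
    exact List.suffix_of_suffix_length_le ha hb (by simp [prefixWord_length]; omega)
  obtain ⟨t, ht⟩ := hsub
  have hlt : t.length = b - a := by
    have := congrArg List.length ht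
    simp [prefixWord_length] at this
    omega
  intro j hj
  have hb' : t.length + j < (prefixWord d b).length := by
    rw [prefixWord_length]; omega
  have ha' : j < (prefixWord d a).length := by rw [prefixWord_length]; omega
  have h1 : (t ++ prefixWord d a)[t.length + j]'(by rw [ht]; exact hb') = d j := by
    rw [List.getElem_append_right (by omega)]
    have : t.length + j - t.length = j := by omega
    simp only [this]
    exact prefixWord_getElem d a j ha'
  have h2 : (t ++ prefixWord d a)[t.length + j]'(by rw [ht]; exact hb') =
      d (t.length + j) := by
    rw [List.getElem_of_eq ht]
    exact prefixWord_getElem d b _ hb'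
  rw [← h1, h2, hlt]

theorem lang_forward {m : ℕ} {d : ℕ → Fin m} {v : List (Fin m)} (hv : v ∈ Lang d) :
    ∀ i, WLe (v.drop i) d := by
  obtain ⟨x, hx, p, hocc⟩ := hv
  intro i
  refine wle_of_seqLe (hx (p + i)) ?_
  intro j hj
  simp only [shift_iter_s10]
  have hj' : i + j < v.length := by
    rw [List.length_drop] at hj; omega
  have := hocc ⟨i + j, hj'⟩
  simp only [List.get_eq_getElem] at this
  rw [List.getElem_drop, ← this]
  congr 1
  omega


lemma classIndex_suffix {m : ℕ} (d : ℕ → Fin m) (v : List (Fin m)) :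
    prefixWord d (classIndex d v.length v) <:+ v := by
  have h0 : (fun k => prefixWord d k <:+ v) 0 := by simp [prefixWord]
  show (fun k => prefixWord d k <:+ v) (Nat.findGreatest (fun k => prefixWord d k <:+ v) v.length)
  exact Nat.findGreatest_spec (P := fun k => prefixWord d k <:+ v) (Nat.zero_le v.length) h0

lemma le_classIndex {m : ℕ} {d : ℕ → Fin m} {v : List (Fin m)} {ℓ : ℕ}
    (h : prefixWord d ℓ <:+ v) : ℓ ≤ classIndex d v.length v := by
  by_contra hc
  push_neg at hc
  have hlen : ℓ ≤ v.length := by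
    have := h.length_le; rwa [prefixWord_length] at this
  exact Nat.findGreatest_is_greatest (P := fun k => prefixWord d k <:+ v) hc hlen h

lemma seqLe_shift {m : ℕ} {d : ℕ → Fin m} (hd : Admissible d) {v : List (Fin m)} {a b : ℕ}
    (ha : prefixWord d a <:+ v) (hb : prefixWord d b <:+ v) (hab : a ≤ b) :
    SeqLe (fun n => d (b + n)) (fun n => d (a + n)) := by
  have key := suffix_fact ha hb hab
  have h := hd.1 (b - a)
  rw [shift_iter_s10] at h
  rcases h with heq | ⟨i, hag, hlt⟩
  · left
    funext n
    have h2 : d (b - a + (a + n)) = d (a + n) := congrFun heq (a + n)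
    show d (b + n) = d (a + n)
    rw [show b + n = b - a + (a + n) by omega]
    exact h2
  · have hlt' : d (b - a + i) < d i := hlt
    have hia : a ≤ i := by
      by_contra hc
      push_neg at hc
      exact absurd ((key i hc) ▸ hlt') (lt_irrefl _)
    right
    refine ⟨i - a, fun j hj => ?_, ?_⟩
    · have h2 : d (b - a + (a + j)) = d (a + j) := hag (a + j) (by omega)
      show d (b + j) = d (a + j)
      rw [show b + j = b - a + (a + j) by omega]
      exact h2
    · show d (b + (i - a)) < d (a + (i - a))
      rw [show b + (i - a) = b - a + i by omega, show a + (i - a) = i by omega]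
      exact hlt'

lemma prefixWord_suffix_of_agree {m : ℕ} {d : ℕ → Fin m} {v : List (Fin m)} {i : ℕ}
    (hag : ∀ j (hj : j < (v.drop i).length), (v.drop i)[j] = d j) :
    prefixWord d (v.drop i).length <:+ v := by
  have heq : prefixWord d (v.drop i).length = v.drop i := by
    apply List.ext_getElem (by rw [prefixWord_length])
    intro j h1 h2
    rw [prefixWord_getElem]
    exact (hag j h2).symm
  rw [heq]
  exact List.drop_suffix i v

theorem lang_backward {m : ℕ} {d : ℕ → Fin m} (hd : Admissible d) {v : List (Fin m)}
    (hall : ∀ i, WLe (v.drop i) d) : v ∈ Lang d := by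
  classical
  set k := classIndex d v.length v with hkdef
  have hksuf : prefixWord d k <:+ v := classIndex_suffix d v
  set x : ℕ → Fin m := fun i => if h : i < v.length then v[i] else d (k + (i - v.length))
    with hxdef
  refine ⟨x, ?_, 0, ?_⟩
  · intro i
    by_cases hi : v.length ≤ i
    · have hx : shift^[i] x = shift^[k + (i - v.length)] d := by
        funext nn
        simp only [shift_iter_s10, hxdef]
        rw [dif_neg (by omega)]
        congr 1
        omega
      rw [hx]
      exact hd.1 _
    · push_neg at hi
      rcases hall i with hag | ⟨j0, hj0, hag, hlt⟩
      · -- v.drop i agrees with d; full shift is a shift of d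
        have hsuf := prefixWord_suffix_of_agree hag
        have hl : (v.drop i).length = v.length - i := by rw [List.length_drop]
        have hlk : (v.drop i).length ≤ k := le_classIndex hsuf
        have key := suffix_fact hsuf hksuf hlk
        have hx : shift^[i] x = shift^[k - (v.drop i).length] d := by
          funext nn
          simp only [shift_iter_s10, hxdef]
          by_cases hnn : nn < (v.drop i).length
          · rw [dif_pos (by omega)]
            have h1 := hag nn hnn
            rw [List.getElem_drop] at h1
            rw [h1]
            exact key nn hnn
          · rw [dif_neg (by omega)]
            congr 1
            omega
        rw [hx]
        exact hd.1 _
      · right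
        refine ⟨j0, fun j hj => ?_, ?_⟩
        · have hjlen : j < (v.drop i).length := lt_trans hj hj0
          have h1 := hag j hjlen hj
          rw [List.getElem_drop] at h1
          simp only [shift_iter_s10, hxdef]
          rw [dif_pos (by rw [List.length_drop] at hjlen; omega)]
          exact h1
        · have h1 := hlt
          rw [List.getElem_drop] at h1
          simp only [shift_iter_s10, hxdef]
          rw [dif_pos (by rw [List.length_drop] at hj0; omega)]
          exact h1
  · intro j
    simp only [hxdef, List.get_eq_getElem, Nat.zero_add]
    rw [dif_pos j.isLt]

lemma wordLe_iff_wle {m n : ℕ} (w : List (Fin m)) (hwl : w.length = n) (e : ℕ → Fin m) :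
    WordLe w (List.ofFn fun i : Fin n => e i) ↔ WLe w e := by
  constructor
  · rintro (rfl | ⟨i, hu, hv, hag, hlt⟩)
    · left
      intro i h
      rw [List.getElem_ofFn]
    · right
      refine ⟨i, hu, fun j hj hji => ?_, ?_⟩
      · have := hag j hj (by simp [List.length_ofFn]; omega) hji
        simp only [List.get_eq_getElem, List.getElem_ofFn] at this
        exact this
      · have := hlt
        simp only [List.get_eq_getElem, List.getElem_ofFn] at this
        exact this
  · rintro (hag | ⟨i, hi, hag, hlt⟩)
    · left
      apply List.ext_getElem (by simp [hwl])
      intro j h1 h2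
      rw [List.getElem_ofFn]
      exact hag j h1
    · right
      refine ⟨i, hi, by simp [List.length_ofFn]; omega, fun j hju hjv hji => ?_, ?_⟩
      · simp only [List.get_eq_getElem, List.getElem_ofFn]
        exact hag j hju hji
      · simp only [List.get_eq_getElem, List.getElem_ofFn]
        exact hlt

lemma getElem_append_right' {m : ℕ} {u w : List (Fin m)} {i t : ℕ} (hui : i = u.length + t)
    (h : i < (u ++ w).length) (ht : t < w.length) : (u ++ w)[i] = w[t] := by
  subst hui
  rw [List.getElem_append_right (by omega)]
  congr 1
  omega

/-- `s ++ w` is legal iff `w` is lexicographically ≤ the `n`-letter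
prefix of `σ^k d`, where `k` is the largest `t ≤ |s|` with `(d)_t` a suffix of `s`. -/
theorem stmt10 (m : ℕ) (hm : 1 ≤ m) (d : ℕ → Fin m) (hd : Admissible d)
    (s : List (Fin m)) (hs : s ∈ Lang d)
    (n : ℕ) (hn : 1 ≤ n) (w : List (Fin m)) (hw : w ∈ Lang d) (hwl : w.length = n) :
    s ++ w ∈ Lang d ↔
      WordLe w (List.ofFn fun i : Fin n => d (classIndex d s.length s + i)) := by
  classical
  set k := classIndex d s.length s with hkdef
  have hksuf : prefixWord d k <:+ s := classIndex_suffix d s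
  have hiff : WordLe w (List.ofFn fun i : Fin n => d (k + (i : ℕ))) ↔
      WLe w (fun t => d (k + t)) := wordLe_iff_wle w hwl (fun t => d (k + t))
  rw [hiff]
  constructor
  · intro h
    obtain ⟨q, hq⟩ := hksuf
    have hdrop : (s ++ w).drop q.length = prefixWord d k ++ w := by
      rw [← hq, List.append_assoc, List.drop_left]
    have h2 : WLe (prefixWord d k ++ w) d := hdrop ▸ lang_forward h q.length
    have hlenpk : (prefixWord d k ++ w).length = k + w.length := by
      simp [prefixWord_length]
    rcases h2 with hag | ⟨i, hi, hag, hlt⟩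
    · left
      intro t ht
      have hlen : k + t < (prefixWord d k ++ w).length := by omega
      have h3 := hag (k + t) hlen
      rw [getElem_append_right' (by rw [prefixWord_length]) hlen ht] at h3
      exact h3
    · have hik : ¬ i < k := by
        intro hik
        have h3 : (prefixWord d k ++ w)[i] = d i := by
          rw [List.getElem_append_left (by rw [prefixWord_length]; exact hik)]
          exact prefixWord_getElem d k i (by rw [prefixWord_length]; exact hik)
        rw [h3] at hlt
        exact absurd hlt (lt_irrefl _)
      push_neg at hik
      right
      refine ⟨i - k, by omega, fun j hj hji => ?_, ?_⟩
      · have hlen : k + j < (prefixWord d k ++ w).length := by omega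
        have h3 := hag (k + j) hlen (by omega)
        rw [getElem_append_right' (by rw [prefixWord_length]) hlen hj] at h3
        show w[j] = d (k + j)
        exact h3
      · have h3 : (prefixWord d k ++ w)[i] = w[i - k] := by
          apply getElem_append_right' (by rw [prefixWord_length]; omega) hi (by omega)
        rw [h3] at hlt
        show w[i - k] < d (k + (i - k))
        rw [show k + (i - k) = i by omega]
        exact hlt
  · intro hwle
    apply lang_backward hd
    intro i
    by_cases hi : s.length ≤ i
    · have hde : (s ++ w).drop i = w.drop (i - s.length) := by
        rw [List.drop_append, List.drop_eq_nil_of_le hi, List.nil_append]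
      rw [hde]
      exact lang_forward hw _
    · push_neg at hi
      have hde : (s ++ w).drop i = s.drop i ++ w := by
        rw [List.drop_append, show i - s.length = 0 by omega, List.drop_zero]
      rw [hde]
      have hu := lang_forward hs i
      rcases hu with hag | ⟨j0, hj0, hag, hlt⟩
      · have hsuf := prefixWord_suffix_of_agree hag
        have hlk : (s.drop i).length ≤ k := le_classIndex hsuf
        have hle2 : SeqLe (fun t => d (k + t)) (fun t => d ((s.drop i).length + t)) :=
          seqLe_shift hd hsuf (classIndex_suffix d s) hlk
        have hwle2 : WLe w (fun t => d ((s.drop i).length + t)) := wle_trans hwle hle2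
        have hlen2 : (s.drop i ++ w).length = (s.drop i).length + w.length := by
          simp [List.length_append]
        rcases hwle2 with hag2 | ⟨t, ht, hag2, hlt2⟩
        · left
          intro j hj
          by_cases hjl : j < (s.drop i).length
          · rw [List.getElem_append_left hjl]
            exact hag j hjl
          · have hjw : j - (s.drop i).length < w.length := by omega
            rw [List.getElem_append_right (by omega)]
            have h3 := hag2 (j - (s.drop i).length) hjw
            exact h3.trans (by show d ((s.drop i).length + (j - (s.drop i).length)) = d j
                               congr 1; omega)
        · right
          refine ⟨(s.drop i).length + t, by omega, fun j hj hji => ?_, ?_⟩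
          · by_cases hjl : j < (s.drop i).length
            · rw [List.getElem_append_left hjl]
              exact hag j hjl
            · rw [List.getElem_append_right (by omega)]
              have h3 := hag2 (j - (s.drop i).length) (by omega) (by omega)
              exact h3.trans (by show d ((s.drop i).length + (j - (s.drop i).length)) = d j
                                 congr 1; omega)
          · rw [getElem_append_right' rfl (by omega) ht]
            exact hlt2
      · right
        have hj0' : j0 < (s.drop i ++ w).length := by rw [List.length_append]; omega
        refine ⟨j0, hj0', fun j hj hji => ?_, ?_⟩
        · rw [List.getElem_append_left (lt_trans hji hj0)]
          exact hag j (lt_trans hji hj0) hji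
        · rw [List.getElem_append_left hj0]
          exact hlt
end
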